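/- Characterisation of B-locally-closed via maximal proper irreducible B-subvarieties: Let k be a field of characteristic zero with a biderivation b_k, and let R be an affine bidifferential k-algebra with biderivation b extending b_k. Then the following are equivalent: (i) the zero ideal is B-locally-closed, i.e., the intersection of all nonzero prime bidifferential ideals of (R,b) is nonzero (with the convention that the empty intersection is R); (ii) the set of minimal elements of the set of nonzero prime bidifferential ideals of (R,b) is finite, and every nonzero prime bidifferential ideal of (R,b) contains such a minimal element. -/
import Mathlib


/-- A derivation on a commutative ring `R` (with values in `R`). -/
def IsDerivO {R : Type*} [CommRing R] (d : R → R) : Prop :=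
  (∀ x y : R, d (x + y) = d x + d y) ∧ (∀ x y : R, d (x * y) = x * d y + y * d x)

/-- A biderivation on a commutative ring `R`. -/
def IsBiderivO {R : Type*} [CommRing R] (b : R → R → R) : Prop :=
  (∀ r : R, IsDerivO (b r)) ∧ (∀ s : R, IsDerivO (fun r => b r s))

/-- An ideal `I` is a bidifferential ideal of `(R, b)` if `b(I × R) ⊆ I` and `b(R × I) ⊆ I`. -/
def IsBidiffIdeal {R : Type*} [CommRing R] (b : R → R → R) (I : Ideal R) : Prop :=
  ∀ a ∈ I, ∀ x : R, b a x ∈ I ∧ b x a ∈ I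

section Aux

variable {R : Type*} [CommRing R]

lemma IsDerivO.d_one {d : R → R} (hd : IsDerivO d) : d 1 = 0 := by
  have h := hd.2 1 1
  rw [mul_one, one_mul] at h
  exact left_eq_add.mp h

lemma IsDerivO.pow_rule {d : R → R} (hd : IsDerivO d) (y : R) (n : ℕ) :
    d (y ^ n) = (n : R) * y ^ (n - 1) * d y := by
  induction n with
  | zero => simp [hd.d_one]
  | succ n ih =>
    rw [pow_succ', hd.2, ih]
    rcases n with _ | m
    · simp
    · simp only [Nat.add_sub_cancel]
      push_cast
      ring

lemma unit_mul_mem {I : Ideal R} {c x : R} (hc : IsUnit c) (h : c * x ∈ I) : x ∈ I := by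
  obtain ⟨u, rfl⟩ := hc
  have h2 := I.mul_mem_left (↑u⁻¹) h
  rwa [← mul_assoc, Units.inv_mul, one_mul] at h2

/-- In the presence of invertible naturals, the radical of a `d`-stable ideal is `d`-stable. -/
lemma deriv_radical {d : R → R} (hd : IsDerivO d)
    (hu : ∀ n : ℕ, 0 < n → IsUnit ((n : R))) {I : Ideal R}
    (hdI : ∀ x ∈ I, d x ∈ I) {a : R} (ha : a ∈ I.radical) : d a ∈ I.radical := by
  obtain ⟨m, hm⟩ := ha
  rcases Nat.eq_zero_or_pos m with rfl | hmpos
  · have hI : (1 : R) ∈ I := by simpa using hm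
    have : d a ∈ I := by
      have h2 := I.mul_mem_left (d a) hI
      rwa [mul_one] at h2
    exact Ideal.le_radical this
  · have key : ∀ t : ℕ, t ≤ m → a ^ (m - t) * d a ^ (2 * t) ∈ I := by
      intro t
      induction t with
      | zero => intro _; simpa using hm
      | succ t ih =>
        intro hle
        have hx := ih (Nat.le_of_succ_le hle)
        obtain ⟨j, hj⟩ : ∃ j, m - t = j + 1 := ⟨m - (t + 1), by omega⟩
        have hj' : m - (t + 1) = j := by omega
        rw [hj] at hx
        rw [hj']
        have hju : IsUnit ((j : R) + 1) := by
          have := hu (j + 1) (Nat.succ_pos j)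
          rwa [Nat.cast_add, Nat.cast_one] at this
        rcases t with _ | u
        · -- t = 0 : hx : a^(j+1) * d a ^ 0 ∈ I
          rw [mul_zero, pow_zero, mul_one] at hx
          have hdx : d (a ^ (j + 1)) ∈ I := hdI _ hx
          have hmem : ((j : R) + 1) * (a ^ j * d a ^ (2 * 1)) ∈ I := by
            have expand : ((j : R) + 1) * (a ^ j * d a ^ (2 * 1)) = d a * d (a ^ (j + 1)) := by
              rw [hd.pow_rule]
              simp only [Nat.add_sub_cancel]
              push_cast
              ring
            rw [expand]
            exact I.mul_mem_left _ hdx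
          exact unit_mul_mem hju hmem
        · -- t = u + 1
          have e1 : 2 * (u + 1) = 2 * u + 2 := by ring
          rw [e1] at hx
          have hdx : d (a ^ (j + 1) * d a ^ (2 * u + 2)) ∈ I := hdI _ hx
          have e2 : 2 * (u + 1 + 1) = 2 * u + 2 + 2 := by ring
          rw [e2]
          have hmem : ((j : R) + 1) * (a ^ j * d a ^ (2 * u + 2 + 2)) ∈ I := by
            have expand : ((j : R) + 1) * (a ^ j * d a ^ (2 * u + 2 + 2)) =
                d a * d (a ^ (j + 1) * d a ^ (2 * u + 2)) -
                  ((2 * u + 2 : ℕ) : R) * d (d a) * (a ^ (j + 1) * d a ^ (2 * u + 2)) := by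
              rw [hd.2, hd.pow_rule, hd.pow_rule]
              have e3 : 2 * u + 2 - 1 = 2 * u + 1 := by omega
              have e4 : j + 1 - 1 = j := by omega
              rw [e3, e4]
              push_cast
              ring
            rw [expand]
            exact sub_mem (I.mul_mem_left _ hdx) (I.mul_mem_left _ hx)
          exact unit_mul_mem hju hmem
    have hfin := key m le_rfl
    rw [Nat.sub_self, pow_zero, one_mul] at hfin
    exact ⟨2 * m, hfin⟩

/-- If `J` is a radical `d`-stable ideal and `u * v ∈ J`, then `u * d v ∈ J`. -/
lemma mul_deriv_mem {d : R → R} (hd : IsDerivO d) {J : Ideal R}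
    (hJrad : J.radical = J) (hdJ : ∀ x ∈ J, d x ∈ J) {u v : R} (huv : u * v ∈ J) :
    u * d v ∈ J := by
  have h1 : d (u * v) ∈ J := hdJ _ huv
  have hsq : (u * d v) ^ 2 = (u * d v) * d (u * v) - (u * v) * (d u * d v) := by
    rw [hd.2]; ring
  have h2 : (u * d v) ^ 2 ∈ J :=
    hsq ▸ sub_mem (J.mul_mem_left _ h1) (J.mul_mem_right _ huv)
  rw [← hJrad]
  exact ⟨2, h2⟩

/-- Localization-free key fact: if `P` is a minimal prime over `J` and `a ∈ P`, then
`s * a ^ n ∈ J` for some `s ∉ P`. -/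
lemma exists_notMem_mul_pow_mem {J P : Ideal R} (hP : P ∈ J.minimalPrimes) {a : R}
    (ha : a ∈ P) : ∃ s, s ∉ P ∧ ∃ n : ℕ, s * a ^ n ∈ J := by
  by_contra hcon
  push_neg at hcon
  have hPp : P.IsPrime := hP.1.1
  have h1P : (1 : R) ∉ P := P.ne_top_iff_one.mp hPp.ne_top
  set M : Submonoid R :=
    { carrier := {x | ∃ s, s ∉ P ∧ ∃ n : ℕ, x = s * a ^ n}
      mul_mem' := by
        rintro x y ⟨s, hs, n, rfl⟩ ⟨t, ht, m, rfl⟩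
        refine ⟨s * t, fun hst => ((hPp.mem_or_mem hst).elim hs ht), n + m, by ring⟩
      one_mem' := ⟨1, h1P, 0, by simp⟩ } with hM
  have hdisj : Disjoint (J : Set R) (M : Set R) := by
    rw [Set.disjoint_left]
    rintro x hx ⟨s, hs, n, rfl⟩
    exact hcon s hs n hx
  obtain ⟨Q, hQp, hJQ, hQdisj⟩ := Ideal.exists_le_prime_disjoint J M hdisj
  have hQP : Q ≤ P := by
    intro x hx
    by_contra hxP
    exact Set.disjoint_left.mp hQdisj hx ⟨x, hxP, 0, by simp⟩
  have hPQ : P ≤ Q := hP.2 ⟨hQp, hJQ⟩ hQP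
  exact Set.disjoint_left.mp hQdisj (hPQ ha) ⟨1, h1P, 1, by simp⟩

/-- Minimal primes over a radical bidifferential ideal are bidifferential. -/
lemma minimalPrime_isBidiff {b : R → R → R} (hb : IsBiderivO b)
    {J : Ideal R} (hJrad : J.radical = J) (hJ : IsBidiffIdeal b J)
    {P : Ideal R} (hP : P ∈ J.minimalPrimes) : IsBidiffIdeal b P := by
  have hPp : P.IsPrime := hP.1.1
  have hJP : J ≤ P := hP.1.2
  intro a ha x
  obtain ⟨s, hs, n, hsn⟩ := exists_notMem_mul_pow_mem hP ha
  have hsa : s * a ∈ J := by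
    rcases n with _ | n
    · exact absurd (hJP (by simpa using hsn)) hs
    · have hpow : (s * a) ^ (n + 1) ∈ J := by
        have e : (s * a) ^ (n + 1) = s ^ n * (s * a ^ (n + 1)) := by ring
        rw [e]
        exact J.mul_mem_left _ hsn
      rw [← hJrad]
      exact ⟨n + 1, hpow⟩
  constructor
  · have h := mul_deriv_mem (hb.2 x) hJrad (fun y hy => (hJ y hy x).1) hsa
    exact (hPp.mem_or_mem (hJP h)).resolve_left hs
  · have h := mul_deriv_mem (hb.1 x) hJrad (fun y hy => (hJ y hy x).2) hsa
    exact (hPp.mem_or_mem (hJP h)).resolve_left hs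

end Aux

/-- Characterisation of B-locally-closed via maximal proper irreducible B-subvarieties
(Lemma 4.7 of "Commutative bidifferential algebra"): the zero ideal of an affine
bidifferential `k`-algebra is B-locally-closed iff there are only finitely many minimal
nonzero prime bidifferential ideals and every nonzero prime bidifferential ideal
contains one of them. -/
theorem bLocallyClosed_iff_finitely_many_minimal_primes
    {k R : Type*} [Field k] [CharZero k]
    [CommRing R] [IsDomain R] [Algebra k R]
    (hfg : Algebra.FiniteType k R)
    (bk : k → k → k) (hbk : IsBiderivO bk)
    (b : R → R → R) (hb : IsBiderivO b)
    (hext : ∀ c c' : k, b (algebraMap k R c) (algebraMap k R c') = algebraMap k R (bk c c')) :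
    (sInf {Q : Ideal R | Q ≠ ⊥ ∧ Q.IsPrime ∧ IsBidiffIdeal b Q} ≠ ⊥) ↔
    ({Q : Ideal R | Minimal (· ∈ {Q' : Ideal R | Q' ≠ ⊥ ∧ Q'.IsPrime ∧ IsBidiffIdeal b Q'}) Q}.Finite ∧
      ∀ Q ∈ {Q' : Ideal R | Q' ≠ ⊥ ∧ Q'.IsPrime ∧ IsBidiffIdeal b Q'},
        ∃ Q₀, Minimal (· ∈ {Q' : Ideal R | Q' ≠ ⊥ ∧ Q'.IsPrime ∧ IsBidiffIdeal b Q'}) Q₀ ∧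
          Q₀ ≤ Q) := by
  haveI := hfg
  haveI : IsNoetherianRing R := Algebra.FiniteType.isNoetherianRing k R
  set S : Set (Ideal R) := {Q' : Ideal R | Q' ≠ ⊥ ∧ Q'.IsPrime ∧ IsBidiffIdeal b Q'} with hSdef
  have hunit : ∀ n : ℕ, 0 < n → IsUnit ((n : R)) := by
    intro n hn
    have h1 : IsUnit ((n : k)) := IsUnit.mk0 _ (Nat.cast_ne_zero.mpr hn.ne')
    have h2 := h1.map (algebraMap k R)
    rwa [map_natCast] at h2
  constructor
  · -- forward direction
    intro hne
    obtain ⟨f, hfS, hf0⟩ := Submodule.exists_mem_ne_zero_of_ne_bot hne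
    set I : Ideal R := sInf {J : Ideal R | f ∈ J ∧ IsBidiffIdeal b J} with hIdef
    have hfI : f ∈ I := Submodule.mem_sInf.mpr fun J hJ => hJ.1
    have hIbd : IsBidiffIdeal b I := by
      intro a ha x
      exact ⟨Submodule.mem_sInf.mpr fun J hJ => (hJ.2 a (Submodule.mem_sInf.mp ha J hJ) x).1,
        Submodule.mem_sInf.mpr fun J hJ => (hJ.2 a (Submodule.mem_sInf.mp ha J hJ) x).2⟩
    set Jr : Ideal R := I.radical with hJrdef
    have hJbd : IsBidiffIdeal b Jr := by
      intro a ha x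
      exact ⟨deriv_radical (hb.2 x) hunit (fun y hy => (hIbd y hy x).1) ha,
        deriv_radical (hb.1 x) hunit (fun y hy => (hIbd y hy x).2) ha⟩
    have hJS : ∀ Q ∈ S, Jr ≤ Q := by
      intro Q hQ
      have hIQ : I ≤ Q := sInf_le ⟨Submodule.mem_sInf.mp hfS Q hQ, hQ.2.2⟩
      calc Jr = I.radical := rfl
        _ ≤ Q.radical := Ideal.radical_mono hIQ
        _ = Q := hQ.2.1.radical
    have hfJr : f ∈ Jr := Ideal.le_radical hfI
    have claimA : ∀ Q ∈ S, ∃ P ∈ Jr.minimalPrimes, P ≤ Q ∧ P ∈ S := by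
      intro Q hQ
      haveI : Q.IsPrime := hQ.2.1
      obtain ⟨P, hPm, hPQ⟩ := Ideal.exists_minimalPrimes_le (hJS Q hQ)
      refine ⟨P, hPm, hPQ, ?_, hPm.1.1, ?_⟩
      · intro hbot
        exact hf0 (by simpa [hbot] using hPm.1.2 hfJr)
      · exact minimalPrime_isBidiff hb (Ideal.radical_idem I) hJbd hPm
    have claimMinS : ∀ P, P ∈ Jr.minimalPrimes → P ∈ S → Minimal (· ∈ S) P := by
      intro P hPm hPS
      exact ⟨hPS, fun Q' hQ' hle => hPm.2 ⟨hQ'.2.1, hJS Q' hQ'⟩ hle⟩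
    constructor
    · have hfin : Jr.minimalPrimes.Finite := by
        rw [Ideal.minimalPrimes_eq_comap]
        exact (minimalPrimes.finite_of_isNoetherianRing (R ⧸ Jr)).image _
      refine hfin.subset ?_
      intro Q hQmin
      obtain ⟨P, hPm, hPQ, hPS⟩ := claimA Q hQmin.1
      have hQP : Q ≤ P := hQmin.2 hPS hPQ
      have : Q = P := le_antisymm hQP hPQ
      rwa [this]
    · intro Q hQ
      obtain ⟨P, hPm, hPQ, hPS⟩ := claimA Q hQ
      exact ⟨P, claimMinS P hPm hPS, hPQ⟩
  · -- reverse direction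
    rintro ⟨hfin, hmin⟩
    set Mset : Set (Ideal R) := {Q : Ideal R | Minimal (· ∈ S) Q} with hMdef
    have hMS : Mset ⊆ S := fun Q hQ => hQ.1
    have hEq : sInf S = sInf Mset := by
      refine le_antisymm (sInf_le_sInf hMS) (le_sInf ?_)
      intro Q hQ
      obtain ⟨P, hPmin, hPQ⟩ := hmin Q hQ
      exact le_trans (sInf_le hPmin) hPQ
    rw [hEq]
    rcases Set.eq_empty_or_nonempty Mset with he | hne
    · rw [he, sInf_empty]
      intro htop
      have h1 : (1 : R) ∈ (⊥ : Ideal R) := htop ▸ trivial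
      exact one_ne_zero ((Submodule.mem_bot R).mp h1)
    · have hchoice : ∀ Q, Q ∈ Mset → ∃ x : R, x ∈ Q ∧ x ≠ 0 := fun Q hQ =>
        Submodule.exists_mem_ne_zero_of_ne_bot hQ.1.1
      choose g hg1 hg2 using hchoice
      classical
      set G : Ideal R → R := fun Q => if h : Q ∈ Mset then g Q h else 1 with hGdef
      have hG1 : ∀ Q, Q ∈ Mset → G Q ∈ Q := by
        intro Q hQ
        rw [hGdef]
        simp only [dif_pos hQ]
        exact hg1 Q hQ
      have hG2 : ∀ Q, G Q ≠ 0 := by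
        intro Q
        rw [hGdef]
        by_cases h : Q ∈ Mset
        · simp only [dif_pos h]; exact hg2 Q h
        · simp only [dif_neg h]; exact one_ne_zero
      set p : R := ∏ Q ∈ hfin.toFinset, G Q with hpdef
      have hp0 : p ≠ 0 := by
        rw [hpdef, Finset.prod_ne_zero_iff]
        exact fun Q _ => hG2 Q
      have hpmem : p ∈ sInf Mset := by
        refine Submodule.mem_sInf.mpr fun Q hQ => ?_
        obtain ⟨c, hc⟩ := Finset.dvd_prod_of_mem G (hfin.mem_toFinset.mpr hQ)
        rw [hpdef, hc]
        exact Ideal.mul_mem_right _ _ (hG1 Q hQ)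
      intro hbot
      exact hp0 ((Submodule.mem_bot R).mp (hbot ▸ hpmem))
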